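/- If G is a split graph of order n that arises from the disjoint union of a clique C of order c and an independent set I of order n−c by adding edges, each joining a vertex of C to a vertex of I, then Mo(G) ≤ (4/27)·n³. -/

import Mathlib

/-- `nG G u v` is the number of vertices of `G` whose distance to `u` is strictly
smaller than their distance to `v` (vertices at infinite distance to both `u` and `v`
are counted for neither, since the extended distance `⊤` is not `< ⊤`). -/
noncomputable def nG {V : Type*} [Fintype V] (G : SimpleGraph V) (u v : V) : ℕ :=
  Set.ncard {w : V | G.edist w u < G.edist w v}

/-- The Mostar index `Mo(G) = ∑_{uv ∈ E(G)} |nG(u,v) - nG(v,u)|` of a finite simple graph. -/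
noncomputable def mostar {V : Type*} [Fintype V] (G : SimpleGraph V) : ℤ :=
  ∑ e ∈ (Set.toFinite G.edgeSet).toFinset,
    Sym2.lift ⟨fun u v => |(nG G u v : ℤ) - (nG G v u : ℤ)|, fun _ _ => abs_sub_comm _ _⟩ e

/-!
For a clique edge `uv` the vertices closer to `u` than to `v` are `u` and the neighbours of `u`
in the independent set `I` that are not neighbours of `v`, so the edge contributes `|d u - d v|`,
where `d` counts neighbours in `I`. For a cross edge `uv` with `v ∈ I` only `v` is closer to `v`,
while `v` and its neighbours other than `u` are not closer to `u`, so the edge contributes at most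
`n - 1 - deg v`. With `s = |I|` and `m` the number of cross edges, the bound
`s |x - y| ≤ s (x + y) - 2 x y` on `[0, s]` and Cauchy–Schwarz give
`s Mo ≤ m (s (c + n - 1) - 2 m) ≤ s² (c + n - 1)² / 8`. As `c + n - 1 < 2n - s`, the AM–GM
bound `27 s (2n - s)² ≤ 32 n³` finishes.
-/

open Finset

section Algebra

variable {ι α : Type*} [CommRing α] [LinearOrder α] [IsStrictOrderedRing α]

theorem mul_sum_sum_abs_sub_le {s : Finset ι} {x : ι → α} {b : α}
    (hx : ∀ i ∈ s, 0 ≤ x i ∧ x i ≤ b) :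
    b * ∑ i ∈ s, ∑ j ∈ s, |x i - x j| ≤
      2 * (∑ i ∈ s, x i) * (b * #s - ∑ i ∈ s, x i) := by
  have hpair : ∀ i ∈ s, ∀ j ∈ s, b * |x i - x j| ≤ b * x i + b * x j - 2 * x i * x j := by
    intro i hi j hj
    obtain ⟨hi0, hib⟩ := hx i hi
    obtain ⟨hj0, hjb⟩ := hx j hj
    rcases le_total (x i) (x j) with hij | hij
    · rw [abs_of_nonpos (sub_nonpos.2 hij)]
      nlinarith
    · rw [abs_of_nonneg (sub_nonneg.2 hij)]
      nlinarith
  calc b * ∑ i ∈ s, ∑ j ∈ s, |x i - x j| = ∑ i ∈ s, ∑ j ∈ s, b * |x i - x j| := by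
        simp only [mul_sum]
    _ ≤ ∑ i ∈ s, ∑ j ∈ s, (b * x i + b * x j - 2 * x i * x j) :=
        sum_le_sum fun i hi => sum_le_sum fun j hj => hpair i hi j hj
    _ = 2 * (∑ i ∈ s, x i) * (b * #s - ∑ i ∈ s, x i) := by
        simp only [sum_add_distrib, sum_sub_distrib, sum_const, nsmul_eq_mul, ← mul_sum,
          ← sum_mul]
        ring

theorem card_mul_sum_mul_sub_le (s : Finset ι) (a : ι → α) (K : α) :
    #s * ∑ i ∈ s, a i * (K - a i) ≤ (∑ i ∈ s, a i) * (K * #s - ∑ i ∈ s, a i) := by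
  have hCS := sq_sum_le_card_mul_sum_sq (s := s) (f := a)
  have hsum : ∑ i ∈ s, a i * (K - a i) = K * ∑ i ∈ s, a i - ∑ i ∈ s, a i ^ 2 := by
    simp only [mul_sub, sum_sub_distrib, mul_sum, sq, mul_comm]
  rw [hsum]
  nlinarith

theorem mul_two_mul_sub_sq_le {s n : α} (hs : 0 ≤ s) (hsn : s ≤ n) :
    27 * (s * (2 * n - s) ^ 2) ≤ 32 * n ^ 3 := by
  nlinarith [mul_nonneg (sq_nonneg (3 * s - 2 * n)) (by linarith : (0 : α) ≤ 8 * n - 3 * s)]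

end Algebra

namespace SimpleGraph

section

variable {V : Type*} {G : SimpleGraph V}

theorem two_le_edist {u v : V} (hne : u ≠ v) (hnadj : ¬G.Adj u v) : 2 ≤ G.edist u v := by
  have h : 1 < G.edist u v := by
    rw [← not_le, edist_le_one_iff_adj_or_eq]
    tauto
  simpa [one_add_one_eq_two] using Order.add_one_le_of_lt h

theorem edist_lt_edist_iff_of_adj {u v w : V} (hvw : G.Adj v w) :
    G.edist w u < G.edist w v ↔ w = u := by
  rw [edist_eq_one_iff_adj.2 hvw.symm, Order.lt_one_iff, edist_eq_zero_iff]

end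

section

variable {V : Type*} [Fintype V] (G : SimpleGraph V) [DecidableRel G.Adj]
  {M : Type*} [AddCommMonoid M]

theorem sum_dart_edge_eq_two_nsmul (f : Sym2 V → M) :
    ∑ d : G.Dart, f d.edge = 2 • ∑ e ∈ G.edgeFinset, f e := by
  classical
  rw [← sum_fiberwise_of_maps_to (g := Dart.edge) (t := G.edgeFinset)
    (fun d _ => mem_edgeFinset.2 d.edge_mem), smul_sum]
  refine sum_congr rfl fun e he => ?_
  rw [sum_congr rfl fun d hd => congrArg f (mem_filter.1 hd).2, sum_const,
    G.dart_edge_fiber_card e (mem_edgeFinset.1 he)]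

theorem sum_dart_eq_sum_neighborFinset (g : V → V → M) :
    ∑ d : G.Dart, g d.fst d.snd = ∑ u, ∑ v ∈ G.neighborFinset u, g u v := by
  classical
  rw [← sum_fiberwise_of_maps_to (g := fun d : G.Dart => d.fst) (t := univ)
    fun _ _ => mem_univ _]
  refine sum_congr rfl fun u _ => ?_
  rw [sum_congr (G.dart_fst_fiber u) fun _ _ => rfl,
    sum_image fun _ _ _ _ h => G.dartOfNeighborSet_injective u h]
  exact (sum_subtype _ (fun v => mem_neighborFinset G u v) (g u)).symm

end

section

variable {V : Type*} [Fintype V]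

theorem nG_eq_card (G : SimpleGraph V) (u v : V) :
    nG G u v = #{w | G.edist w u < G.edist w v} := by
  rw [nG, ← Set.ncard_coe_finset, coe_filter]
  simp

theorem one_le_nG {G : SimpleGraph V} {u v : V} (huv : u ≠ v) : 1 ≤ nG G u v := by
  rw [nG_eq_card]
  exact card_pos.2 ⟨u, by simpa using edist_pos_of_ne huv⟩

/-- Neither `v` nor a neighbour of `v` other than `u` is closer to `u` than to `v`. -/
theorem nG_add_degree_le [DecidableEq V] (G : SimpleGraph V) [DecidableRel G.Adj] (u v : V) :
    nG G u v + G.degree v ≤ Fintype.card V := by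
  rw [nG_eq_card]
  set S : Finset V := {w | G.edist w u < G.edist w v}
  have hS : S ∩ insert v (G.neighborFinset v) ⊆ {u} := by
    intro w hw
    simp only [S, mem_inter, mem_filter, mem_univ, true_and, mem_insert,
      mem_neighborFinset] at hw
    obtain ⟨hlt, rfl | hvw⟩ := hw
    · simp at hlt
    · exact mem_singleton.2 ((edist_lt_edist_iff_of_adj hvw).1 hlt)
  have hunion := card_union_add_card_inter S (insert v (G.neighborFinset v))
  rw [card_insert_of_notMem (by simp), card_neighborFinset_eq_degree] at hunion
  have hinter := card_le_card hS
  have huniv := card_le_univ (S ∪ insert v (G.neighborFinset v))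
  rw [card_singleton] at hinter
  omega

theorem two_mul_mostar (G : SimpleGraph V) [DecidableRel G.Adj] :
    2 * mostar G = ∑ u, ∑ v ∈ G.neighborFinset u, |(nG G u v : ℤ) - nG G v u| := by
  rw [mostar, Set.toFinite_toFinset, ← edgeFinset, ← sum_dart_eq_sum_neighborFinset, two_mul,
    ← two_nsmul, ← sum_dart_edge_eq_two_nsmul]
  rfl

end

variable {V : Type*}

structure IsSplitWith (G : SimpleGraph V) (s : Set V) : Prop where
  isClique : G.IsClique s
  isIndepSet : G.IsIndepSet sᶜ

namespace IsSplitWith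

section

variable {G : SimpleGraph V} {s : Set V} {u v w : V}

theorem not_adj (h : G.IsSplitWith s) (hu : u ∉ s) (hv : v ∉ s) : ¬G.Adj u v := fun huv =>
  h.isIndepSet hu hv huv.ne huv

theorem mem_of_adj (h : G.IsSplitWith s) (hu : u ∉ s) (huv : G.Adj u v) : v ∈ s := by
  by_contra hv
  exact h.not_adj hu hv huv

theorem edist_le_one (h : G.IsSplitWith s) (hu : u ∈ s) (hv : v ∈ s) : G.edist u v ≤ 1 := by
  rw [edist_le_one_iff_adj_or_eq]
  by_cases huv : u = v
  · exact Or.inr huv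
  · exact Or.inl (h.isClique hu hv huv)

/-- Once `w` has a neighbour, which lies in the clique, every clique vertex is within distance two
of `w`, whereas a non-neighbour of `w` is at distance at least two. -/
theorem edist_le_edist_of_not_adj (h : G.IsSplitWith s) (hw : w ∉ s) (hu : u ∈ s)
    (hwv : w ≠ v) (hnadj : ¬G.Adj w v) : G.edist w u ≤ G.edist w v := by
  rcases eq_or_ne (G.edist w v) ⊤ with htop | hfin
  · simp [htop]
  obtain ⟨p, -⟩ := exists_walk_of_edist_ne_top hfin
  cases p with
  | nil => exact absurd rfl hwv
  | cons hwx _ =>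
    calc G.edist w u ≤ G.edist w _ + G.edist _ u := SimpleGraph.edist_triangle
      _ ≤ 1 + 1 := add_le_add (edist_eq_one_iff_adj.2 hwx).le
          (h.edist_le_one (h.mem_of_adj hw hwx) hu)
      _ ≤ G.edist w v := by simpa [one_add_one_eq_two] using two_le_edist hwv hnadj

theorem edist_lt_edist_iff_of_mem (h : G.IsSplitWith s) (hu : u ∈ s) (hv : v ∈ s)
    (huv : u ≠ v) :
    G.edist w u < G.edist w v ↔ w = u ∨ w ∉ s ∧ G.Adj w u ∧ ¬G.Adj w v := by
  by_cases hw : w ∈ s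
  · simp only [hw, not_true_eq_false, false_and, or_false]
    constructor
    · intro hlt
      by_contra hwu
      exact not_lt.2 (h.edist_le_one hw hv)
        (lt_of_le_of_lt (Order.one_le_iff_pos.2 (edist_pos_of_ne hwu)) hlt)
    · rintro rfl
      simpa using edist_pos_of_ne huv
  have hwu : w ≠ u := fun e => hw (e ▸ hu)
  have hwv : w ≠ v := fun e => hw (e ▸ hv)
  simp only [hwu, hw, not_false_eq_true, true_and, false_or]
  constructor
  · intro hlt
    by_cases hadj : G.Adj w u
    · refine ⟨hadj, fun hadj' => ?_⟩
      rw [edist_eq_one_iff_adj.2 hadj, edist_eq_one_iff_adj.2 hadj'] at hlt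
      exact lt_irrefl _ hlt
    · exact absurd hlt (not_lt.2 (h.edist_le_edist_of_not_adj hw hv hwu hadj))
  · rintro ⟨hadj, hnadj⟩
    rw [edist_eq_one_iff_adj.2 hadj]
    exact lt_of_lt_of_le (by norm_num) (two_le_edist hwv hnadj)

theorem edist_lt_edist_iff_of_notMem (h : G.IsSplitWith s) (hu : u ∈ s) (hv : v ∉ s)
    (huv : G.Adj u v) : G.edist w v < G.edist w u ↔ w = v := by
  refine ⟨fun hlt => ?_, ?_⟩
  · by_contra hwv
    have hle : G.edist w u ≤ G.edist w v := by
      by_cases hw : w ∈ s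
      · exact (h.edist_le_one hw hu).trans (Order.one_le_iff_pos.2 (edist_pos_of_ne hwv))
      · exact h.edist_le_edist_of_not_adj hw hu hwv (h.not_adj hw hv)
    exact not_lt.2 hle hlt
  · rintro rfl
    simpa using edist_pos_of_ne huv.ne.symm

end

variable [Fintype V] [DecidableEq V] {G : SimpleGraph V} [DecidableRel G.Adj] {C : Finset V}
  {u v : V}

theorem nG_sub_nG_of_mem (h : G.IsSplitWith C) (hu : u ∈ C) (hv : v ∈ C) :
    (nG G u v : ℤ) - nG G v u = #(G.neighborFinset u \ C) - #(G.neighborFinset v \ C) := by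
  rcases eq_or_ne u v with rfl | huv
  · simp
  have hnG : ∀ {x y}, x ∈ C → y ∈ C → x ≠ y →
      nG G x y = #((G.neighborFinset x \ C) \ (G.neighborFinset y \ C)) + 1 := by
    intro x y hx hy hxy
    rw [nG_eq_card, ← card_insert_of_notMem (a := x) (by simp [hx])]
    congr 1
    ext w
    simp only [mem_filter, mem_univ, true_and, h.edist_lt_edist_iff_of_mem hx hy hxy, mem_insert,
      mem_sdiff, mem_neighborFinset, G.adj_comm x w, G.adj_comm y w]
    tauto
  have hxy := card_sdiff_add_card (G.neighborFinset u \ C) (G.neighborFinset v \ C)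
  have hyx := card_sdiff_add_card (G.neighborFinset v \ C) (G.neighborFinset u \ C)
  rw [union_comm] at hyx
  rw [hnG hu hv huv, hnG hv hu huv.symm]
  omega

theorem abs_nG_sub_nG_le (h : G.IsSplitWith C) (hv : v ∉ C) (hvu : G.Adj v u) :
    |(nG G v u : ℤ) - nG G u v| ≤ Fintype.card V - 1 - G.degree v := by
  have hvu' : nG G v u = 1 := by
    rw [nG_eq_card, card_eq_one]
    exact ⟨v, by ext w; simp [h.edist_lt_edist_iff_of_notMem (h.mem_of_adj hv hvu) hv hvu.symm]⟩
  have hone := one_le_nG (G := G) hvu.ne.symm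
  have hle := nG_add_degree_le G u v
  rw [hvu', abs_sub_comm, abs_of_nonneg (by omega)]
  omega

theorem two_mul_mostar_eq (h : G.IsSplitWith C) :
    2 * mostar G = ∑ u ∈ C, ∑ v ∈ C, |(nG G u v : ℤ) - nG G v u| +
      2 * ∑ u ∈ Cᶜ, ∑ v ∈ G.neighborFinset u, |(nG G u v : ℤ) - nG G v u| := by
  have hclique : ∀ u ∈ C, {v ∈ G.neighborFinset u | v ∈ C} = C.erase u := by
    intro u hu
    ext v
    simp only [mem_filter, mem_neighborFinset, mem_erase]
    exact ⟨fun ⟨huv, hv⟩ => ⟨huv.ne.symm, hv⟩,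
      fun ⟨hvu, hv⟩ => ⟨h.isClique hu hv hvu.symm, hv⟩⟩
  have hcross :
      ∑ u ∈ C, ∑ v ∈ G.neighborFinset u with v ∉ C, |(nG G u v : ℤ) - nG G v u| =
      ∑ v ∈ Cᶜ, ∑ u ∈ G.neighborFinset v, |(nG G v u : ℤ) - nG G u v| := by
    rw [sum_comm' (t' := Cᶜ) (s' := fun v => G.neighborFinset v) fun u v => ?_]
    · exact sum_congr rfl fun _ _ => sum_congr rfl fun _ _ => abs_sub_comm _ _
    simp only [mem_filter, mem_neighborFinset, mem_compl]
    exact ⟨fun ⟨_, huv, hv⟩ => ⟨huv.symm, hv⟩,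
      fun ⟨hvu, hv⟩ => ⟨h.mem_of_adj hv hvu, hvu.symm, hv⟩⟩
  rw [two_mul_mostar, ← sum_add_sum_compl C, two_mul, ← add_assoc]
  congr 1
  rw [← hcross, ← sum_add_distrib]
  refine sum_congr rfl fun u hu => ?_
  rw [← sum_filter_add_sum_filter_not _ (· ∈ C), hclique u hu, sum_erase _ (by simp)]

theorem two_mul_mostar_le (h : G.IsSplitWith C) :
    2 * mostar G ≤
      ∑ u ∈ C, ∑ v ∈ C, |(#(G.neighborFinset u \ C) : ℤ) - #(G.neighborFinset v \ C)| +
      2 * ∑ v ∈ Cᶜ, (G.degree v : ℤ) * (Fintype.card V - 1 - G.degree v) := by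
  rw [h.two_mul_mostar_eq]
  refine add_le_add (le_of_eq (sum_congr rfl fun u hu => sum_congr rfl fun v hv => ?_))
    (mul_le_mul_of_nonneg_left (sum_le_sum fun v hv => ?_) zero_le_two)
  · rw [h.nG_sub_nG_of_mem hu hv]
  calc ∑ w ∈ G.neighborFinset v, |(nG G v w : ℤ) - nG G w v|
      ≤ ∑ w ∈ G.neighborFinset v, ((Fintype.card V : ℤ) - 1 - G.degree v) :=
        sum_le_sum fun w hw =>
          h.abs_nG_sub_nG_le (mem_compl.1 hv) ((G.mem_neighborFinset _ _).1 hw)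
    _ = G.degree v * (Fintype.card V - 1 - G.degree v) := by
        rw [sum_const, card_neighborFinset_eq_degree, nsmul_eq_mul]

theorem sum_card_neighborFinset_sdiff (h : G.IsSplitWith C) :
    ∑ u ∈ C, #(G.neighborFinset u \ C) = ∑ v ∈ Cᶜ, G.degree v := by
  have habove : ∀ u, Cᶜ.bipartiteAbove G.Adj u = G.neighborFinset u \ C := fun u => by
    ext v
    simp [bipartiteAbove, and_comm]
  have hbelow : ∀ v ∈ Cᶜ, C.bipartiteBelow G.Adj v = G.neighborFinset v := fun v hv => by
    ext u
    simp only [bipartiteBelow, mem_filter, mem_neighborFinset, G.adj_comm u v]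
    exact ⟨And.right, fun hvu => ⟨h.mem_of_adj (mem_compl.1 hv) hvu, hvu⟩⟩
  simp_rw [← habove, sum_card_bipartiteAbove_eq_sum_card_bipartiteBelow,
    ← card_neighborFinset_eq_degree]
  exact sum_congr rfl fun v hv => by rw [hbelow v hv]

theorem eight_mul_mostar_le (h : G.IsSplitWith C) :
    8 * mostar G ≤ #Cᶜ * (#C + Fintype.card V - 1 : ℤ) ^ 2 := by
  have hdeg : ∀ u, #(G.neighborFinset u \ C) ≤ #Cᶜ := fun u =>
    card_le_card fun v hv => mem_compl.2 (mem_sdiff.1 hv).2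
  have hmostar := h.two_mul_mostar_le
  rcases Nat.eq_zero_or_pos #Cᶜ with hs | hs
  · have hCc : Cᶜ = ∅ := card_eq_zero.1 hs
    have hzero : ∀ u, #(G.neighborFinset u \ C) = 0 := fun u => by simpa [hs] using hdeg u
    simp only [hCc, hzero, sum_empty, sub_self, abs_zero, sum_const_zero] at hmostar
    simp only [hs, Nat.cast_zero, zero_mul]
    linarith
  have hA := mul_sum_sum_abs_sub_le (s := C) (x := fun u => (#(G.neighborFinset u \ C) : ℤ))
    (b := #Cᶜ) fun u _ => ⟨Nat.cast_nonneg _, Nat.cast_le.2 (hdeg u)⟩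
  have hB := card_mul_sum_mul_sub_le Cᶜ (fun v => (G.degree v : ℤ)) (Fintype.card V - 1)
  rw [← Nat.cast_sum, h.sum_card_neighborFinset_sdiff, Nat.cast_sum] at hA
  set s : ℤ := (#Cᶜ : ℤ)
  set m : ℤ := ∑ v ∈ Cᶜ, (G.degree v : ℤ)
  have hpos : (0 : ℤ) < s := Nat.cast_pos.2 hs
  have hsMo : s * (8 * mostar G) ≤ 8 * m * (s * (#C + Fintype.card V - 1)) - 16 * m ^ 2 := by
    nlinarith [mul_le_mul_of_nonneg_left hmostar hpos.le]
  refine le_of_mul_le_mul_left ?_ hpos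
  nlinarith [sq_nonneg (s * (#C + Fintype.card V - 1) - 4 * m)]

end IsSplitWith

end SimpleGraph

theorem mostar_split_le_univ_general {V : Type*} [Fintype V] (G : SimpleGraph V)
    (n c : ℕ) (hn : Fintype.card V = n)
    (C : Finset V) (hC : C.card = c)
    (hclique : ∀ u ∈ C, ∀ v ∈ C, u ≠ v → G.Adj u v)
    (hindep : ∀ u ∉ C, ∀ v ∉ C, ¬ G.Adj u v) :
    (mostar G : ℝ) ≤ (4 / 27 : ℝ) * (n : ℝ) ^ 3 := by
  classical
  have hsplit : G.IsSplitWith C := ⟨hclique, fun u hu v hv _ => hindep u hu v hv⟩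
  have hMo := hsplit.eight_mul_mostar_le
  have hcard : (#Cᶜ : ℤ) + c = n := by rw [← hC, ← hn]; exact_mod_cast card_compl_add_card C
  rw [hC, hn] at hMo
  suffices 27 * mostar G ≤ 4 * (n : ℤ) ^ 3 by
    have hR : ((27 * mostar G : ℤ) : ℝ) ≤ ((4 * n ^ 3 : ℤ) : ℝ) := Int.cast_le.2 this
    push_cast at hR
    linarith
  have hs0 : (0 : ℤ) ≤ #Cᶜ := Nat.cast_nonneg _
  rcases Nat.eq_zero_or_pos #Cᶜ with hs | hs
  · simp only [hs, Nat.cast_zero, zero_mul] at hMo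
    have : (0 : ℤ) ≤ n ^ 3 := by positivity
    linarith
  have hy0 : (0 : ℤ) ≤ c + n - 1 := by omega
  have hy : (c + n - 1 : ℤ) ≤ 2 * n - #Cᶜ := by linarith
  have hsq := mul_le_mul_of_nonneg_left (pow_le_pow_left₀ hy0 hy 2) hs0
  have := mul_two_mul_sub_sq_le hs0 (by omega : (#Cᶜ : ℤ) ≤ n)
  linarith

/-- If `G` is a split graph of order `n` (a clique `C` of order `c`, an independent set
`I = Cᶜ` of order `n - c`, plus edges each joining `C` to `I`), then `Mo(G) ≤ (4/27)·n³`. -/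
theorem mostar_split_le_univ {V : Type*} [Fintype V] [DecidableEq V] (G : SimpleGraph V)
    (n c : ℕ) (hn : Fintype.card V = n)
    (C : Finset V) (hC : C.card = c)
    (hclique : ∀ u ∈ C, ∀ v ∈ C, u ≠ v → G.Adj u v)
    (hindep : ∀ u ∉ C, ∀ v ∉ C, ¬ G.Adj u v) :
    (mostar G : ℝ) ≤ (4 / 27 : ℝ) * (n : ℝ) ^ 3 :=
  mostar_split_le_univ_general G n c hn C hC hclique hindep
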